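/- Suppose Assumption H4 holds, let φ(x) = ∫₀^x ds/σ(s) (a smooth increasing bijection of ℝ with smooth inverse φ⁻¹), and set Ψ = −(1/2) σ' ∘ φ⁻¹. Then Ψ is a smooth and bounded function on ℝ, and all its derivatives are uniformly bounded: for every n ≥ 1, sup_{y∈ℝ} |Ψ^{(n)}(y)| < ∞. -/

import Mathlib

noncomputable section
open Set Filter

/-- Assumption H4 on the diffusion coefficient: `σ` is smooth, positive, with bounded
derivatives; `σ = σ₀ σ_b` with `σ₀(q) = |q|^{γ/2}` for `|q| ≥ 1`, `0 ≤ γ ≤ 1/2`, and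
`σ_b` smooth and bounded with bounded derivatives, `0 < δ₋ ≤ σ_b ≤ δ₊`; moreover
`|σ^{(n)}(q)| ≤ S_n |q|^{γ/2 - n}` for `|q| ≥ 1`, for every `n ≥ 1`. -/
def HypH4 (σ σ0 σb : ℝ → ℝ) (γ δm δp : ℝ) : Prop :=
  ContDiff ℝ (⊤ : ℕ∞) σ ∧ (∀ q, 0 < σ q) ∧
  (∀ n : ℕ, 1 ≤ n → ∃ C : ℝ, ∀ q, |iteratedDeriv n σ q| ≤ C) ∧
  (∀ q, σ q = σ0 q * σb q) ∧
  0 ≤ γ ∧ γ ≤ 1 / 2 ∧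
  (∀ q : ℝ, 1 ≤ |q| → σ0 q = |q| ^ (γ / 2)) ∧
  ContDiff ℝ (⊤ : ℕ∞) σb ∧
  (∀ n : ℕ, 1 ≤ n → ∃ C : ℝ, ∀ q, |iteratedDeriv n σb q| ≤ C) ∧
  0 < δm ∧ (∀ q, δm ≤ σb q ∧ σb q ≤ δp) ∧
  (∀ n : ℕ, 1 ≤ n → ∃ S : ℝ,
    ∀ q : ℝ, 1 ≤ |q| → |iteratedDeriv n σ q| ≤ S * |q| ^ (γ / 2 - (n : ℝ)))

/-- Assumption H5 on the initial condition: `𝔠₀` is smooth and bounded and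
`‖𝔠₀^{(n)} σ₀^n‖_{C⁰} ≤ R_n` for every `n ≥ 1`. -/
def HypH5 (c0 σ0 : ℝ → ℝ) : Prop :=
  ContDiff ℝ (⊤ : ℕ∞) c0 ∧ (∃ C : ℝ, ∀ q, |c0 q| ≤ C) ∧
  ∀ n : ℕ, 1 ≤ n → ∃ R : ℝ, ∀ q, |iteratedDeriv n c0 q| * |σ0 q| ^ n ≤ R

/-- `c` is a classical solution of the Cauchy problem
`∂_t 𝔠 = (1/2) σ(q)² ∂²_q 𝔠`, `𝔠(0, ·) = 𝔠₀`, on `ℝ₊ × ℝ`. -/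
def IsDiffSolution (σ c0 : ℝ → ℝ) (c : ℝ → ℝ → ℝ) : Prop :=
  (∀ q, c 0 q = c0 q) ∧
  (∀ t ∈ Ici (0 : ℝ), ContDiff ℝ 2 (fun q => c t q)) ∧
  ContinuousOn (fun p : ℝ × ℝ => c p.1 p.2) (Ici 0 ×ˢ univ) ∧
  ∀ t ∈ Ici (0 : ℝ), ∀ q : ℝ,
    HasDerivWithinAt (fun s => c s q)
      ((1 / 2) * (σ q) ^ 2 * iteratedDeriv 2 (fun x => c t x) q) (Ici 0) t

/-- The Lamperti change of variable `φ(x) = ∫₀^x ds/σ(s)`. -/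
def lamperti (σ : ℝ → ℝ) : ℝ → ℝ := fun x => ∫ s in (0 : ℝ)..x, 1 / σ s


set_option maxHeartbeats 1600000
open Topology

/-- Class of smooth functions whose `n`-th derivative is `O((1+|q|)^(α-n))`. -/
def Ecl (α : ℝ) (h : ℝ → ℝ) : Prop :=
  ContDiff ℝ (⊤ : ℕ∞) h ∧ ∀ n : ℕ, ∃ C : ℝ, 0 ≤ C ∧
    ∀ q : ℝ, |iteratedDeriv n h q| ≤ C * (1 + |q|) ^ (α - n : ℝ)

lemma one_le_base (q : ℝ) : (1:ℝ) ≤ 1 + |q| := le_add_of_nonneg_right (abs_nonneg q)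
lemma base_pos (q : ℝ) : (0:ℝ) < 1 + |q| := lt_of_lt_of_le one_pos (one_le_base q)

lemma Ecl.mono' {α β : ℝ} {h : ℝ → ℝ} (hab : α ≤ β) (H : Ecl α h) : Ecl β h := by
  refine ⟨H.1, fun n => ?_⟩
  obtain ⟨C, hC0, hC⟩ := H.2 n
  refine ⟨C, hC0, fun q => (hC q).trans ?_⟩
  exact mul_le_mul_of_nonneg_left
    (Real.rpow_le_rpow_of_exponent_le (one_le_base q) (by linarith)) hC0

lemma contDiff_top_deriv {f : ℝ → ℝ} (hf : ContDiff ℝ (⊤ : ℕ∞) f) : ContDiff ℝ (⊤ : ℕ∞) (deriv f) :=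
  (contDiff_infty_iff_deriv.mp hf).2

lemma Ecl.deriv' {α : ℝ} {h : ℝ → ℝ} (H : Ecl α h) : Ecl (α - 1) (deriv h) := by
  refine ⟨contDiff_top_deriv H.1, fun n => ?_⟩
  obtain ⟨C, hC0, hC⟩ := H.2 (n + 1)
  refine ⟨C, hC0, fun q => ?_⟩
  rw [← iteratedDeriv_succ']
  have := hC q
  have he : α - (n + 1 : ℕ) = α - 1 - n := by push_cast; ring
  rwa [he] at this

lemma Ecl.mul {α β : ℝ} {f g : ℝ → ℝ} (Hf : Ecl α f) (Hg : Ecl β g) :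
    Ecl (α + β) (fun q => f q * g q) := by
  refine ⟨Hf.1.mul Hg.1, fun n => ?_⟩
  choose Cf hCf0 hCf using Hf.2
  choose Cg hCg0 hCg using Hg.2
  refine ⟨∑ i ∈ Finset.range (n+1), (n.choose i : ℝ) * Cf i * Cg (n - i), ?_, fun q => ?_⟩
  · exact Finset.sum_nonneg fun i _ =>
      mul_nonneg (mul_nonneg (Nat.cast_nonneg _) (hCf0 i)) (hCg0 _)
  have hb := base_pos q
  have h1 : |iteratedDeriv n (fun q => f q * g q) q|
      ≤ ∑ i ∈ Finset.range (n+1), (n.choose i : ℝ) *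
        |iteratedDeriv i f q| * |iteratedDeriv (n - i) g q| := by
    have := norm_iteratedFDeriv_mul_le (𝕜 := ℝ) Hf.1 Hg.1 q (n := n) (by exact_mod_cast (le_top : (n : ℕ∞) ≤ ⊤))
    simpa [norm_iteratedFDeriv_eq_norm_iteratedDeriv, Real.norm_eq_abs] using this
  refine h1.trans ?_
  rw [Finset.sum_mul]
  refine Finset.sum_le_sum fun i hi => ?_
  have hin : i ≤ n := Nat.lt_succ_iff.mp (Finset.mem_range.mp hi)
  have e1 : (1 + |q|) ^ (α - i : ℝ) * (1 + |q|) ^ (β - (n - i : ℕ) : ℝ)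
      = (1 + |q|) ^ (α + β - n : ℝ) := by
    rw [← Real.rpow_add hb]
    congr 1
    have : ((n - i : ℕ) : ℝ) = (n : ℝ) - i := by rw [Nat.cast_sub hin]
    rw [this]; ring
  have hrp1 : (0:ℝ) ≤ (1 + |q|) ^ (α - i : ℝ) := (Real.rpow_pos_of_pos hb _).le
  have hrp2 : (0:ℝ) ≤ (1 + |q|) ^ (β - (n - i : ℕ) : ℝ) := (Real.rpow_pos_of_pos hb _).le
  calc (n.choose i : ℝ) * |iteratedDeriv i f q| * |iteratedDeriv (n - i) g q|
      ≤ (n.choose i : ℝ) * (Cf i * (1 + |q|) ^ (α - i : ℝ))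
        * (Cg (n - i) * (1 + |q|) ^ (β - (n - i : ℕ) : ℝ)) := by
        apply mul_le_mul
        · exact mul_le_mul_of_nonneg_left (hCf i q) (Nat.cast_nonneg _)
        · exact hCg (n - i) q
        · exact abs_nonneg _
        · exact mul_nonneg (Nat.cast_nonneg _) (mul_nonneg (hCf0 i) hrp1)
    _ = (n.choose i : ℝ) * Cf i * Cg (n - i) *
        ((1 + |q|) ^ (α - i : ℝ) * (1 + |q|) ^ (β - (n - i : ℕ) : ℝ)) := by ring
    _ = (n.choose i : ℝ) * Cf i * Cg (n - i) * (1 + |q|) ^ (α + β - n : ℝ) := by rw [e1]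

lemma Ecl.const_mul {α : ℝ} {h : ℝ → ℝ} (H : Ecl α h) (c : ℝ) :
    Ecl α (fun q => c * h q) := by
  refine ⟨contDiff_const.mul H.1, fun n => ?_⟩
  obtain ⟨C, hC0, hC⟩ := H.2 n
  refine ⟨|c| * C, by positivity, fun q => ?_⟩
  have h1 : iteratedFDeriv ℝ n (fun q => c * h q) q = c • iteratedFDeriv ℝ n h q := by
    simpa [smul_eq_mul] using
      iteratedFDeriv_const_smul_apply' (𝕜 := ℝ) (i := n) (f := h) (a := c) (x := q)
        (H.1.contDiffAt.of_le (by exact_mod_cast le_top))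
  have h2 : |iteratedDeriv n (fun q => c * h q) q| = |c| * |iteratedDeriv n h q| := by
    rw [← Real.norm_eq_abs, ← norm_iteratedFDeriv_eq_norm_iteratedDeriv, h1,
      norm_smul c (iteratedFDeriv ℝ n h q), norm_iteratedFDeriv_eq_norm_iteratedDeriv,
      Real.norm_eq_abs, Real.norm_eq_abs]
  rw [h2, mul_assoc]
  exact mul_le_mul_of_nonneg_left (hC q) (abs_nonneg c)

lemma ecl_sigma {σ σ0 σb : ℝ → ℝ} {γ δm δp : ℝ} (h4 : HypH4 σ σ0 σb γ δm δp) :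
    Ecl (γ / 2) σ := by
  obtain ⟨hs, hpos, hbd, hfac, hγ0, hγh, h0eq, -, -, hδm, hδ, hSn⟩ := h4
  refine ⟨hs, fun n => ?_⟩
  match n with
  | 0 =>
    obtain ⟨C₀, hC₀⟩ := (isCompact_Icc (a := (-1:ℝ)) (b := 1)).exists_bound_of_continuousOn
      (hs.continuous.continuousOn (s := Icc (-1) 1))
    have hδp : (0:ℝ) ≤ δp := le_trans hδm.le ((hδ 0).1.trans (hδ 0).2)
    refine ⟨max C₀ δp, le_max_of_le_right hδp, fun q => ?_⟩
    have hC : (0:ℝ) ≤ max C₀ δp := le_max_of_le_right hδp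
    have hrp1 : (1:ℝ) ≤ (1 + |q|) ^ (γ / 2 - (0:ℕ) : ℝ) := by
      push_cast
      rw [sub_zero]
      exact Real.one_le_rpow (one_le_base q) (by linarith)
    rw [iteratedDeriv_zero]
    by_cases hq : 1 ≤ |q|
    · have hσq : σ q = |q| ^ (γ / 2) * σb q := by rw [hfac q, h0eq q hq]
      have h1 : |σ q| = σ q := abs_of_pos (hpos q)
      have h2 : σ q ≤ |q| ^ (γ / 2) * δp := by
        rw [hσq]
        exact mul_le_mul_of_nonneg_left (hδ q).2 (Real.rpow_nonneg (abs_nonneg q) _)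
      have h3 : |q| ^ (γ / 2) ≤ (1 + |q|) ^ (γ / 2) :=
        Real.rpow_le_rpow (abs_nonneg q) (by linarith) (by linarith)
      calc |σ q| = σ q := h1
        _ ≤ |q| ^ (γ / 2) * δp := h2
        _ ≤ (1 + |q|) ^ (γ / 2) * δp :=
            mul_le_mul_of_nonneg_right h3 hδp
        _ ≤ max C₀ δp * (1 + |q|) ^ (γ / 2 - (0:ℕ) : ℝ) := by
            rw [mul_comm]
            push_cast
            rw [sub_zero]
            exact mul_le_mul_of_nonneg_right (le_max_right _ _)
              (Real.rpow_nonneg (base_pos q).le _)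
    · push_neg at hq
      have hmem : q ∈ Icc (-1:ℝ) 1 := abs_le.mp hq.le
      have := hC₀ q hmem
      rw [Real.norm_eq_abs] at this
      calc |σ q| ≤ C₀ := this
        _ ≤ max C₀ δp := le_max_left _ _
        _ ≤ max C₀ δp * (1 + |q|) ^ (γ / 2 - (0:ℕ) : ℝ) := le_mul_of_one_le_right hC hrp1
  | (n + 1) =>
    obtain ⟨Cn, hCn⟩ := hbd (n+1) (by omega)
    obtain ⟨Sn, hSnb⟩ := hSn (n+1) (by omega)
    have hCn0 : 0 ≤ Cn := (abs_nonneg _).trans (hCn 0)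
    have hSn0 : 0 ≤ Sn := by
      have h1 := hSnb 1 (by norm_num)
      rw [abs_one, Real.one_rpow, mul_one] at h1
      exact (abs_nonneg _).trans h1
    set e : ℝ := γ / 2 - ((n+1 : ℕ) : ℝ) with he
    have he0 : e ≤ 0 := by
      rw [he]; push_cast
      have : (0:ℝ) ≤ n := Nat.cast_nonneg n
      linarith
    set K : ℝ := (2:ℝ) ^ (-e) with hK
    have hKpos : 0 < K := Real.rpow_pos_of_pos (by norm_num) _
    have hK2 : K * (2:ℝ) ^ e = 1 := by
      rw [hK, ← Real.rpow_add (by norm_num)]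
      simp
    refine ⟨max Sn Cn * K, by positivity, fun q => ?_⟩
    have hb := base_pos q
    have hrpe : (0:ℝ) ≤ (1 + |q|) ^ e := (Real.rpow_pos_of_pos hb e).le
    by_cases hq : 1 ≤ |q|
    · have hq0 : (0:ℝ) < |q| := lt_of_lt_of_le one_pos hq
      have h2q : 2 * |q| ≥ 1 + |q| := by linarith
      have key : |q| ^ e ≤ K * (1 + |q|) ^ e := by
        have h1 : (2 * |q|) ^ e ≤ (1 + |q|) ^ e :=
          Real.rpow_le_rpow_of_nonpos hb h2q he0
        rw [Real.mul_rpow (by norm_num) (abs_nonneg q)] at h1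
        calc |q| ^ e = K * ((2:ℝ) ^ e * |q| ^ e) := by
              rw [← mul_assoc, hK2, one_mul]
          _ ≤ K * (1 + |q|) ^ e := mul_le_mul_of_nonneg_left h1 hKpos.le
      calc |iteratedDeriv (n+1) σ q| ≤ Sn * |q| ^ e := hSnb q hq
        _ ≤ Sn * (K * (1 + |q|) ^ e) := mul_le_mul_of_nonneg_left key hSn0
        _ ≤ max Sn Cn * K * (1 + |q|) ^ e := by
            rw [mul_assoc]
            exact mul_le_mul_of_nonneg_right (le_max_left _ _)
              (by positivity)
    · push_neg at hq
      have h1q : 1 + |q| ≤ 2 := by linarith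
      have key2 : (1:ℝ) ≤ K * (1 + |q|) ^ e := by
        have h1 : (2:ℝ) ^ e ≤ (1 + |q|) ^ e :=
          Real.rpow_le_rpow_of_nonpos hb h1q he0
        calc (1:ℝ) = K * (2:ℝ) ^ e := hK2.symm
          _ ≤ K * (1 + |q|) ^ e := mul_le_mul_of_nonneg_left h1 hKpos.le
      calc |iteratedDeriv (n+1) σ q| ≤ Cn := hCn q
        _ ≤ Cn * (K * (1 + |q|) ^ e) := le_mul_of_one_le_right hCn0 key2
        _ ≤ max Sn Cn * K * (1 + |q|) ^ e := by
            rw [mul_assoc]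
            exact mul_le_mul_of_nonneg_right (le_max_right _ _) (by positivity)

/-- Under H4, with `φ⁻¹` the inverse of the smooth increasing bijection
`φ(x) = ∫₀^x ds/σ(s)`, the function `Ψ = -(1/2) σ' ∘ φ⁻¹` is smooth and bounded on `ℝ`
and all its derivatives are uniformly bounded. -/
theorem stmt19 (σ σ0 σb : ℝ → ℝ) (γ δm δp : ℝ) (h4 : HypH4 σ σ0 σb γ δm δp)
    (φinv : ℝ → ℝ) (hinv1 : ∀ x, φinv (lamperti σ x) = x)
    (hinv2 : ∀ y, lamperti σ (φinv y) = y) :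
    ContDiff ℝ (⊤ : ℕ∞) (fun y => -(1 / 2) * deriv σ (φinv y)) ∧
    (∃ C : ℝ, ∀ y : ℝ, |-(1 / 2) * deriv σ (φinv y)| ≤ C) ∧
    ∀ n : ℕ, 1 ≤ n → ∃ C : ℝ,
      ∀ y : ℝ, |iteratedDeriv n (fun z => -(1 / 2) * deriv σ (φinv z)) y| ≤ C := by
  obtain ⟨hσsm, hσpos, hσbd, hfac, hγ0, hγh, h0eq, hbs, hbb, hδm, hδ, hSn⟩ := h4
  have h4' : HypH4 σ σ0 σb γ δm δp :=
    ⟨hσsm, hσpos, hσbd, hfac, hγ0, hγh, h0eq, hbs, hbb, hδm, hδ, hSn⟩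
  have hσcont : Continuous σ := hσsm.continuous
  have hσne : ∀ x, σ x ≠ 0 := fun x => (hσpos x).ne'
  have hicont : Continuous (fun s : ℝ => 1 / σ s) := continuous_const.div hσcont hσne
  have hφd : ∀ x, HasStrictDerivAt (lamperti σ) (1 / σ x) x := fun x =>
    hicont.integral_hasStrictDerivAt 0 x
  have hone : ∀ x, 1 / σ x ≠ 0 := fun x => by
    simp only [one_div, ne_eq, inv_eq_zero]; exact hσne x
  have hφmono : StrictMono (lamperti σ) := by
    apply strictMono_of_deriv_pos
    intro x
    rw [(hφd x).hasDerivAt.deriv]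
    exact div_pos one_pos (hσpos x)
  have hinvmono : StrictMono φinv := by
    intro a b hab
    by_contra hcon
    push_neg at hcon
    have : b ≤ a := by
      calc b = lamperti σ (φinv b) := (hinv2 b).symm
        _ ≤ lamperti σ (φinv a) := hφmono.monotone hcon
        _ = a := hinv2 a
    exact absurd hab (not_lt.mpr this)
  have hinvsurj : Function.Surjective φinv := fun x => ⟨lamperti σ x, hinv1 x⟩
  have hinvcont : Continuous φinv := hinvmono.monotone.continuous_of_surjective hinvsurj
  have hφcont : Continuous (lamperti σ) :=
    continuous_iff_continuousAt.mpr fun x => (hφd x).hasDerivAt.continuousAt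
  have hφinvd : ∀ y, HasDerivAt φinv (σ (φinv y)) y := by
    intro y
    have h1 := HasDerivAt.of_local_left_inverse (hinvcont.continuousAt)
      (hφd (φinv y)).hasDerivAt (hone (φinv y)) (Eventually.of_forall hinv2)
    simpa [one_div, inv_inv] using h1
  let e : ℝ ≃ₜ ℝ :=
    { toFun := lamperti σ
      invFun := φinv
      left_inv := hinv1
      right_inv := hinv2
      continuous_toFun := hφcont
      continuous_invFun := hinvcont }
  have hφinvsm : ContDiff ℝ (⊤ : ℕ∞) φinv := by
    apply contDiff_iff_contDiffAt.mpr
    intro y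
    have ha : y ∈ e.toOpenPartialHomeomorph.target := by
      simp [Homeomorph.toOpenPartialHomeomorph]
    have hsymm : e.toOpenPartialHomeomorph.symm = φinv := rfl
    have hderiv : HasFDerivAt (lamperti σ)
        ((ContinuousLinearEquiv.unitsEquivAut ℝ
          (Units.mk0 _ (hone (φinv y)))) : ℝ →L[ℝ] ℝ)
        (e.toOpenPartialHomeomorph.symm y) :=
      (hφd (φinv y)).hasDerivAt.hasFDerivAt_equiv (hone (φinv y))
    have hcd : ContDiffAt ℝ (⊤ : ℕ∞) (lamperti σ) (e.toOpenPartialHomeomorph.symm y) :=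
      by
        have hd : deriv (lamperti σ) = fun s => 1 / σ s :=
          funext fun x => (hφd x).hasDerivAt.deriv
        exact (contDiff_infty_iff_deriv.mpr ⟨fun x => (hφd x).hasDerivAt.differentiableAt,
          by rw [hd]; exact contDiff_const.div hσsm hσne⟩).contDiffAt
    have := e.toOpenPartialHomeomorph.contDiffAt_symm ha hderiv hcd
    rwa [hsymm] at this
  -- the chain of functions G n, with Ψ⁽ⁿ⁾ = (G n) ∘ φinv
  set G : ℕ → (ℝ → ℝ) := fun n => Nat.rec (fun q => -(1 / 2) * deriv σ q)
    (fun _ Gn => fun q => deriv Gn q * σ q) n with hGdef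
  have hG0 : G 0 = fun q => -(1 / 2) * deriv σ q := rfl
  have hGsucc : ∀ n, G (n + 1) = fun q => deriv (G n) q * σ q := fun n => rfl
  have hσE : Ecl (γ / 2) σ := ecl_sigma h4'
  have hG : ∀ n, Ecl (γ / 2 - 1) (G n) := by
    intro n
    induction n with
    | zero =>
      rw [hG0]
      exact (hσE.deriv').const_mul (-(1/2))
    | succ n ih =>
      rw [hGsucc n]
      have h1 : Ecl ((γ / 2 - 1 - 1) + γ / 2) (fun q => deriv (G n) q * σ q) :=
        (ih.deriv').mul hσE
      exact h1.mono' (by linarith)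
  have hGd : ∀ n y, HasDerivAt (fun z => G n (φinv z))
      (G (n + 1) (φinv y)) y := by
    intro n y
    have h1 : HasDerivAt (G n) (deriv (G n) (φinv y)) (φinv y) :=
      (((hG n).1.differentiable (by simp)) (φinv y)).hasDerivAt
    have h2 := HasDerivAt.comp y h1 (hφinvd y)
    rw [hGsucc n]
    exact h2
  have hkey : ∀ n, (iteratedDeriv n (fun z => -(1 / 2) * deriv σ (φinv z)))
      = fun y => G n (φinv y) := by
    intro n
    induction n with
    | zero => funext y; rw [iteratedDeriv_zero, hG0]
    | succ n ih =>
      funext y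
      rw [iteratedDeriv_succ, ih]
      exact (hGd n y).deriv
  have hbound : ∀ n, ∃ C : ℝ, ∀ q : ℝ, |G n q| ≤ C := by
    intro n
    obtain ⟨C, hC0, hC⟩ := (hG n).2 0
    refine ⟨C, fun q => ?_⟩
    have h1 := hC q
    rw [iteratedDeriv_zero] at h1
    refine h1.trans ?_
    have h2 : (1 + |q|) ^ (γ / 2 - 1 - (0:ℕ) : ℝ) ≤ 1 := by
      apply Real.rpow_le_one_of_one_le_of_nonpos (one_le_base q)
      push_cast; linarith
    calc C * (1 + |q|) ^ (γ / 2 - 1 - (0:ℕ) : ℝ) ≤ C * 1 :=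
          mul_le_mul_of_nonneg_left h2 hC0
      _ = C := mul_one C
  refine ⟨?_, ?_, ?_⟩
  · -- smoothness
    have h1 : ContDiff ℝ (⊤ : ℕ∞) (fun q => -(1 / 2) * deriv σ q) :=
      contDiff_const.mul (contDiff_top_deriv hσsm)
    exact h1.comp hφinvsm
  · -- boundedness
    obtain ⟨C, hC⟩ := hbound 0
    exact ⟨C, fun y => hC (φinv y)⟩
  · -- bounded derivatives
    intro n _
    obtain ⟨C, hC⟩ := hbound n
    refine ⟨C, fun y => ?_⟩
    rw [hkey n]
    exact hC (φinv y)
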